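/- The 11-vertex graph F_11 defined as follows admits a demand coloring with palette {1,...,31}: assign to each vertex w a subset of {1,...,31} of size at least 12 − d(w), where d(w) is its degree, such that adjacent vertices receive disjoint sets. F_11 consists of a triangle u v w, vertices u', v' with uu', vv' ∈ E, vertices x, y with edge xy and edges u'x, u'y, v'x, v'y, and vertices a, b with edges au', bv', ab, aw_1, aw_2, bw_1, bw_2, where w_1, w_2 are the two neighbors of w outside the triangle (so w w_1, w w_2 ∈ E and w_1, w_2 are adjacent to both a and b). -/

import Mathlib

open SimpleGraph

/-- The fractional chromatic number, as the infimum of `a/b` over all `(a:b)`-colorings. -/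
noncomputable def fracChrom {V : Type*} (G : SimpleGraph V) : ℝ :=
  sInf {r : ℝ | ∃ a b : ℕ, 0 < b ∧
    (∃ ψ : V → Finset (Fin a), (∀ v, b ≤ (ψ v).card) ∧
      ∀ u v, G.Adj u v → Disjoint (ψ u) (ψ v)) ∧ r = a / b}

/-- The square of the 8-cycle. -/
def C8sq : SimpleGraph (ZMod 8) := SimpleGraph.circulantGraph ({1, 2} : Set (ZMod 8))

instance : DecidablePred (· ∈ ({1, 2} : Set (ZMod 8))) := fun x =>
  decidable_of_iff (x = 1 ∨ x = 2) (by simp)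

instance : DecidableRel C8sq.Adj :=
  inferInstanceAs (DecidableRel (SimpleGraph.circulantGraph ({1, 2} : Set (ZMod 8))).Adj)

/-- The strong product of two simple graphs. -/
def strongProd {α β : Type*} (G : SimpleGraph α) (H : SimpleGraph β) :
    SimpleGraph (α × β) where
  Adj x y := x ≠ y ∧ (x.1 = y.1 ∨ G.Adj x.1 y.1) ∧ (x.2 = y.2 ∨ H.Adj x.2 y.2)
  symm := ⟨fun x y h => ⟨h.1.symm, h.2.1.imp Eq.symm (fun a => G.symm.symm _ _ a),
    h.2.2.imp Eq.symm (fun a => H.symm.symm _ _ a)⟩⟩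
  loopless := ⟨fun x h => h.1 rfl⟩

instance {α β : Type*} [DecidableEq α] [DecidableEq β] (G : SimpleGraph α) (H : SimpleGraph β)
    [DecidableRel G.Adj] [DecidableRel H.Adj] : DecidableRel (strongProd G H).Adj :=
  fun x y => inferInstanceAs
    (Decidable (x ≠ y ∧ (x.1 = y.1 ∨ G.Adj x.1 y.1) ∧ (x.2 = y.2 ∨ H.Adj x.2 y.2)))

/-- The strong product `C₅ ⊠ K₂`. -/
def C5K2 : SimpleGraph (Fin 5 × Fin 2) :=
  strongProd (SimpleGraph.cycleGraph 5) (⊤ : SimpleGraph (Fin 2))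

/-- The independence number of a graph. -/
noncomputable def indepNum {V : Type*} (G : SimpleGraph V) : ℕ :=
  sSup {n | ∃ s : Finset V, s.card = n ∧ ∀ u ∈ s, ∀ v ∈ s, ¬G.Adj u v}

/-- The edge list of the graph `F₁₁` with vertices
`u = 0, v = 1, w = 2, u' = 3, v' = 4, x = 5, y = 6, a = 7, b = 8, w₁ = 9, w₂ = 10`. -/
def F11edges : List (Fin 11 × Fin 11) :=
  [(0,1),(0,2),(1,2),(0,3),(1,4),(2,9),(2,10),(5,6),(3,5),(3,6),(4,5),(4,6),(7,3),(8,4),(7,8),(7,9),(7,10),(8,9),(8,10)]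

/-- The graph `F₁₁`. -/
def F11 : SimpleGraph (Fin 11) := SimpleGraph.fromRel (fun i j => (i, j) ∈ F11edges)

instance : DecidableRel F11.Adj :=
  fun i j => inferInstanceAs (Decidable (i ≠ j ∧ ((i, j) ∈ F11edges ∨ (j, i) ∈ F11edges)))

def F11Coloring : Fin 11 → Finset (Fin 31)
  | 0 => {4, 5, 6, 7, 13, 14, 20, 21, 28}
  | 1 => {0, 1, 3, 9, 10, 11, 16, 17, 23}
  | 2 => {8, 15, 22, 24, 25, 26, 29, 30}
  | 3 => {0, 12, 15, 16, 18, 25, 26, 27}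
  | 4 => {12, 14, 18, 19, 21, 22, 24, 27}
  | 5 => {3, 6, 7, 8, 10, 13, 20, 28, 29}
  | 6 => {1, 2, 4, 5, 9, 11, 17, 23, 30}
  | 7 => {8, 10, 11, 14, 21, 22, 24, 30}
  | 8 => {1, 2, 4, 15, 16, 20, 25, 26}
  | 9 => {0, 3, 5, 13, 17, 18, 19, 23, 27}
  | 10 => {0, 5, 6, 7, 9, 12, 19, 23, 27}

theorem F11Coloring_disjoint_of_adj :
    ∀ i j, F11.Adj i j → Disjoint (F11Coloring i) (F11Coloring j) := by
  decide

theorem F11_degree_add_card_F11Coloring :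
    ∀ w, F11.degree w + (F11Coloring w).card = 12 := by
  decide

/-- `F₁₁` admits a demand coloring from the palette `{1,…,31}` where each
vertex `w` receives at least `12 - d(w)` colors and adjacent vertices get disjoint sets. -/
theorem F11_demand_coloring :
    ∃ ψ : Fin 11 → Finset (Fin 31),
      (∀ i j, F11.Adj i j → Disjoint (ψ i) (ψ j)) ∧
      (∀ w, 12 - F11.degree w ≤ (ψ w).card) :=
  ⟨F11Coloring, F11Coloring_disjoint_of_adj,
    fun w => by have := F11_degree_add_card_F11Coloring w; omega⟩
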